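/- Let Φ be a Leonard system in 𝒜 ≅ Mat_{d+1}(K) and define a_i = tr(E*_i A) for 0 ≤ i ≤ d and x_i = tr(E*_i A E*_{i−1} A) for 1 ≤ i ≤ d. Then: (i) E*_i A E*_i = a_i E*_i for 0 ≤ i ≤ d; (ii) E*_i A E*_{i−1} A E*_i = x_i E*_i for 1 ≤ i ≤ d; (iii) x_i ≠ 0 for 1 ≤ i ≤ d. -/

import Mathlib

/-!
The `E*_i` are `d + 1` nonzero orthogonal idempotents summing to the identity of
`Mat_{d+1}(K)`; since ranks of orthogonal idempotents add, each `E*_i` has rank one, say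
`E*_i = u vᵀ`. For a rank-one matrix `M` one has `M X M = tr (M X) • M`, which gives (i) and (ii).
For (iii), write also `E*_{i-1} = u' v'ᵀ`: then
`E*_i A E*_{i-1} A E*_i = (vᵀ A u') (v'ᵀ A u) • E*_i`, and both scalars are nonzero because
`E*_i A E*_{i-1}` and `E*_{i-1} A E*_i` are.
-/

open Matrix Polynomial

def IsTridiag {K : Type*} [Field K] {n : ℕ} (M : Matrix (Fin n) (Fin n) K) : Prop :=
  ∀ i j : Fin n, ((i : ℕ) + 1 < j ∨ (j : ℕ) + 1 < i) → M i j = 0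

def IsIrredTridiag {K : Type*} [Field K] {n : ℕ} (M : Matrix (Fin n) (Fin n) K) : Prop :=
  IsTridiag M ∧ ∀ i j : Fin n, ((i : ℕ) + 1 = j ∨ (j : ℕ) + 1 = i) → M i j ≠ 0

/-- Entry of a matrix with natural-number indices; `0` when out of range. -/
def mentry {K : Type*} [Field K] {n : ℕ} (M : Matrix (Fin n) (Fin n) K) (i j : ℕ) : K :=
  if h : i < n ∧ j < n then M ⟨i, h.1⟩ ⟨j, h.2⟩ else 0

/-- A family indexed by `Fin (d+1)` viewed as indexed by `ℕ`, with value `0` out of range. -/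
def natIdx {d : ℕ} {M : Type*} [Zero M] (E : Fin (d+1) → M) (n : ℕ) : M :=
  if h : n < d + 1 then E ⟨n, h⟩ else 0

/-- A Leonard system of diameter `d` in the matrix algebra `Mat_{d+1}(K)`:
`A`, `As` are multiplicity-free with eigenvalues `θ i`, `θs i` and primitive
idempotents `E i`, `Es i`, satisfying the tridiagonal conditions. -/
structure LeonardSystem (K : Type*) [Field K] (d : ℕ) where
  A : Matrix (Fin (d+1)) (Fin (d+1)) K
  As : Matrix (Fin (d+1)) (Fin (d+1)) K
  E : Fin (d+1) → Matrix (Fin (d+1)) (Fin (d+1)) K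
  Es : Fin (d+1) → Matrix (Fin (d+1)) (Fin (d+1)) K
  θ : Fin (d+1) → K
  θs : Fin (d+1) → K
  θ_inj : Function.Injective θ
  θs_inj : Function.Injective θs
  E_ne : ∀ i, E i ≠ 0
  Es_ne : ∀ i, Es i ≠ 0
  E_mul : ∀ i j, E i * E j = if i = j then E i else 0
  Es_mul : ∀ i j, Es i * Es j = if i = j then Es i else 0
  E_sum : ∑ i, E i = 1
  Es_sum : ∑ i, Es i = 1
  A_eq : A = ∑ i, θ i • E i
  As_eq : As = ∑ i, θs i • Es i
  EAsE_zero : ∀ i j : Fin (d+1), ((i:ℕ) + 1 < j ∨ (j:ℕ) + 1 < i) → E i * As * E j = 0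
  EAsE_ne : ∀ i j : Fin (d+1), ((i:ℕ) + 1 = j ∨ (j:ℕ) + 1 = i) → E i * As * E j ≠ 0
  EsAEs_zero : ∀ i j : Fin (d+1), ((i:ℕ) + 1 < j ∨ (j:ℕ) + 1 < i) → Es i * A * Es j = 0
  EsAEs_ne : ∀ i j : Fin (d+1), ((i:ℕ) + 1 = j ∨ (j:ℕ) + 1 = i) → Es i * A * Es j ≠ 0

/-- A Leonard pair in `Mat_{d+1}(K)`. -/
structure LeonardPair (K : Type*) [Field K] (d : ℕ) where
  A : Matrix (Fin (d+1)) (Fin (d+1)) K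
  As : Matrix (Fin (d+1)) (Fin (d+1)) K
  cond1 : ∃ P : Matrix (Fin (d+1)) (Fin (d+1)) K, IsUnit P ∧
    IsIrredTridiag (P⁻¹ * A * P) ∧ (P⁻¹ * As * P).IsDiag
  cond2 : ∃ P : Matrix (Fin (d+1)) (Fin (d+1)) K, IsUnit P ∧
    (P⁻¹ * A * P).IsDiag ∧ IsIrredTridiag (P⁻¹ * As * P)

namespace Matrix

theorem vecMulVec_mul_mul_vecMulVec {R : Type*} [CommSemiring R] {l m n o : Type*}
    [Fintype m] [Fintype n] (u : l → R) (v : m → R) (X : Matrix m n R) (u' : n → R) (v' : o → R) :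
    vecMulVec u v * X * vecMulVec u' v' = (v ⬝ᵥ X *ᵥ u') • vecMulVec u v' := by
  rw [vecMulVec_mul, vecMulVec_mul_vecMulVec, dotProduct_mulVec]
  ext a b
  simp only [vecMulVec_apply, Pi.smul_apply, smul_apply, smul_eq_mul]
  ring

variable {K : Type*} [Field K] {m n : Type*} [Fintype n]

theorem rank_add_rank_le_rank_add_of_isIdempotentElem {e f : Matrix n n K}
    (he : IsIdempotentElem e) (hf : IsIdempotentElem f) (hef : e * f = 0) (hfe : f * e = 0) :
    e.rank + f.rank ≤ (e + f).rank := by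
  have range_le (g : Matrix n n K) (hg : (e + f) * g = g) :
      LinearMap.range g.mulVecLin ≤ LinearMap.range (e + f).mulVecLin := by
    rw [← hg, mulVecLin_mul]
    exact LinearMap.range_comp_le_range _ _
  have disjoint : LinearMap.range e.mulVecLin ⊓ LinearMap.range f.mulVecLin = ⊥ := by
    refine eq_bot_iff.mpr fun x ⟨⟨a, hea⟩, ⟨b, hfb⟩⟩ => ?_
    simp only [mulVecLin_apply] at hea hfb
    have fixed {g : Matrix n n K} (hg : IsIdempotentElem g) {y : n → K} (hy : g *ᵥ y = x) :
        g *ᵥ x = x := by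
      rw [← hy, mulVec_mulVec, hg.eq]
    calc x = e *ᵥ f *ᵥ x := by rw [fixed hf hfb, fixed he hea]
      _ = 0 := by rw [mulVec_mulVec, hef, zero_mulVec]
  have := Submodule.finrank_sup_add_finrank_inf_eq (LinearMap.range e.mulVecLin)
    (LinearMap.range f.mulVecLin)
  rw [disjoint, finrank_bot, add_zero] at this
  rw [rank, rank, ← this, rank]
  refine Submodule.finrank_mono (sup_le (range_le e ?_) (range_le f ?_))
  · rw [add_mul, he.eq, hfe, add_zero]
  · rw [add_mul, hf.eq, hef, zero_add]

variable [DecidableEq n]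

theorem rank_pos_of_ne_zero {M : Matrix m n K} (hM : M ≠ 0) : 0 < M.rank := by
  refine Nat.pos_of_ne_zero fun h => hM <| Matrix.toLin'.injective ?_
  rw [Matrix.rank, Submodule.finrank_eq_zero, LinearMap.range_eq_bot] at h
  rw [Matrix.toLin'_apply', h, map_zero]

theorem exists_eq_vecMulVec_of_rank_le_one {M : Matrix m n K} (hM : M.rank ≤ 1) :
    ∃ (u : m → K) (v : n → K), M = vecMulVec u v := by
  obtain ⟨u, hu⟩ := finrank_le_one_iff.mp hM
  choose v hv using fun j => hu ⟨M *ᵥ Pi.single j 1, Pi.single j 1, rfl⟩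
  refine ⟨u, v, ?_⟩
  ext a j
  have := congrFun (congrArg Subtype.val (hv j)) a
  simp only [SetLike.val_smul, Pi.smul_apply, smul_eq_mul, mulVec_single_one, col_apply] at this
  rw [vecMulVec_apply, ← this, mul_comm]

theorem mul_mul_self_eq_trace_mul_smul_of_rank_le_one {M : Matrix n n K} (hM : M.rank ≤ 1)
    (X : Matrix n n K) : M * X * M = trace (M * X) • M := by
  obtain ⟨u, v, rfl⟩ := exists_eq_vecMulVec_of_rank_le_one hM
  rw [vecMulVec_mul_mul_vecMulVec, vecMulVec_mul, trace_vecMulVec, dotProduct_mulVec,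
    dotProduct_comm]

theorem mul_mul_mul_mul_self_ne_zero_of_rank_le_one {M N : Matrix n n K} (hM : M.rank ≤ 1)
    (hN : N.rank ≤ 1) {X Y : Matrix n n K} (hMN : M * X * N ≠ 0) (hNM : N * Y * M ≠ 0) :
    M * X * N * Y * M ≠ 0 := by
  have hM0 : M ≠ 0 := by rintro rfl; simp at hMN
  obtain ⟨u, v, rfl⟩ := exists_eq_vecMulVec_of_rank_le_one hM
  obtain ⟨u', v', rfl⟩ := exists_eq_vecMulVec_of_rank_le_one hN
  rw [vecMulVec_mul_mul_vecMulVec] at hMN ⊢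
  rw [vecMulVec_mul_mul_vecMulVec] at hNM
  rw [smul_mul_assoc, smul_mul_assoc, vecMulVec_mul_mul_vecMulVec, smul_smul]
  exact smul_ne_zero (mul_ne_zero (left_ne_zero_of_smul hMN) (left_ne_zero_of_smul hNM))
    hM0

end Matrix

section Idempotents

variable {K : Type*} [Field K] {n ι : Type*} [Fintype n] [DecidableEq n] {e : ι → Matrix n n K}

theorem OrthogonalIdempotents.sum_rank_le_rank_sum (he : OrthogonalIdempotents e)
    (s : Finset ι) : ∑ i ∈ s, (e i).rank ≤ (∑ i ∈ s, e i).rank := by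
  classical
  induction s using Finset.induction_on with
  | empty => simp
  | insert a s ha ih =>
    rw [Finset.sum_insert ha, Finset.sum_insert ha]
    calc (e a).rank + ∑ i ∈ s, (e i).rank ≤ (e a).rank + (∑ i ∈ s, e i).rank := by gcongr
      _ ≤ _ := Matrix.rank_add_rank_le_rank_add_of_isIdempotentElem (he.idem a)
        he.isIdempotentElem_sum (he.mul_sum_of_notMem ha) (Finset.sum_mul s e (e a) ▸
          Finset.sum_eq_zero fun i hi => he.ortho (ne_of_mem_of_not_mem hi ha))

theorem CompleteOrthogonalIdempotents.rank_eq_one [Fintype ι]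
    (he : CompleteOrthogonalIdempotents e) (hne : ∀ i, e i ≠ 0)
    (hcard : Fintype.card ι = Fintype.card n) (i : ι) : (e i).rank = 1 := by
  have hpos (j : ι) : 1 ≤ (e j).rank := Matrix.rank_pos_of_ne_zero (hne j)
  have hsum : ∑ j, (e j).rank ≤ ∑ _j : ι, 1 := by
    simpa [he.complete, Matrix.rank_one, hcard] using he.sum_rank_le_rank_sum Finset.univ
  exact ((Finset.sum_eq_sum_iff_of_le fun j _ => hpos j).mp
    (le_antisymm (Finset.sum_le_sum fun j _ => hpos j) hsum) i (Finset.mem_univ i)).symm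

end Idempotents

theorem natIdx_of_lt {d : ℕ} {M : Type*} [Zero M] (E : Fin (d+1) → M) {n : ℕ} (h : n < d + 1) :
    natIdx E n = E ⟨n, h⟩ :=
  dif_pos h

namespace LeonardSystem

variable {K : Type*} [Field K] {d : ℕ} (L : LeonardSystem K d)

theorem completeOrthogonalIdempotents_Es : CompleteOrthogonalIdempotents L.Es :=
  ⟨OrthogonalIdempotents.iff_mul_eq.mpr L.Es_mul, L.Es_sum⟩

theorem rank_Es_le_one (i : Fin (d+1)) : (L.Es i).rank ≤ 1 :=
  (L.completeOrthogonalIdempotents_Es.rank_eq_one L.Es_ne (by simp) i).le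

end LeonardSystem

theorem stmt10 {K : Type*} [Field K] {d : ℕ} (L : LeonardSystem K d) :
    (∀ i : Fin (d+1),
      L.Es i * L.A * L.Es i = (Matrix.trace (L.Es i * L.A)) • L.Es i) ∧
    (∀ i : Fin (d+1), 1 ≤ (i:ℕ) →
      L.Es i * L.A * natIdx L.Es ((i:ℕ) - 1) * L.A * L.Es i =
        (Matrix.trace (L.Es i * L.A * natIdx L.Es ((i:ℕ) - 1) * L.A)) • L.Es i) ∧
    (∀ i : Fin (d+1), 1 ≤ (i:ℕ) →
      Matrix.trace (L.Es i * L.A * natIdx L.Es ((i:ℕ) - 1) * L.A) ≠ 0) := by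
  have hrank := L.rank_Es_le_one
  have hsandwich (i : Fin (d+1)) (j : ℕ) :
      L.Es i * L.A * natIdx L.Es j * L.A * L.Es i =
        trace (L.Es i * L.A * natIdx L.Es j * L.A) • L.Es i := by
    simpa only [mul_assoc] using
      mul_mul_self_eq_trace_mul_smul_of_rank_le_one (hrank i) (L.A * natIdx L.Es j * L.A)
  refine ⟨fun i => mul_mul_self_eq_trace_mul_smul_of_rank_le_one (hrank i) L.A,
    fun i _ => hsandwich i _, fun i hi htrace => ?_⟩
  have hj : (i:ℕ) - 1 < d + 1 := by omega
  have hadj : (i:ℕ) - 1 + 1 = i := by omega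
  have hne := mul_mul_mul_mul_self_ne_zero_of_rank_le_one (hrank i) (hrank ⟨_, hj⟩)
    (L.EsAEs_ne i _ (Or.inr hadj)) (L.EsAEs_ne _ i (Or.inl hadj))
  rw [← natIdx_of_lt L.Es hj, hsandwich, htrace, zero_smul] at hne
  exact hne rfl
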